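/- Let K ⊂ ℝ² be compact and let (νₙ)ₙ and ν be finite Borel measures on ℝ², all supported in K, such that νₙ converges to ν in the weak-* sense (∫ f dνₙ → ∫ f dν for every bounded continuous f : ℝ² → ℝ). Then for every fixed r > 0, ‖νₙ‖_r → ‖ν‖_r as n → ∞. Moreover, if (νₙ¹)ₙ, ν¹ and (νₙ²)ₙ, ν² are two such weak-* convergent families of finite Borel measures supported in K, then ⟨νₙ¹, νₙ²⟩_r → ⟨ν¹, ν²⟩_r as n → ∞. -/

import Mathlib

/-!
For fixed `r`, the integrand `z ↦ νₙ¹(B(z,r)) νₙ²(B(z,r))` vanishes off the `r`-thickening of `K`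
and is bounded by the product of the total masses, which converge; so dominated convergence
applies as soon as the integrand converges for almost every `z`. By the portmanteau theorem,
`νₙ(B(z,r)) → ν(B(z,r))` whenever the circle `S(z,r)` is `ν`-null, and by Fubini this holds for
Lebesgue-almost every `z`, because every circle is Lebesgue-null. The norm is the square root of
the diagonal case.
-/

open Metric MeasureTheory Filter

/-- The scale-`r` bilinear form of two measures on the plane:
`⟨μ₁, μ₂⟩_r = (1/r⁴) ∫ μ₁(B(z,r)) μ₂(B(z,r)) dz`. -/
noncomputable def rInner (μ₁ μ₂ : Measure (EuclideanSpace ℝ (Fin 2))) (r : ℝ) : ℝ :=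
  (1 / r ^ 4) *
    ∫ z : EuclideanSpace ℝ (Fin 2), (μ₁ (ball z r)).toReal * (μ₂ (ball z r)).toReal

/-- The scale-`r` norm `‖μ‖_r = ⟨μ, μ⟩_r^{1/2}`. -/
noncomputable def rNorm (μ : Measure (EuclideanSpace ℝ (Fin 2))) (r : ℝ) : ℝ :=
  Real.sqrt (rInner μ μ r)

open Topology
open scoped NNReal

namespace MeasureTheory.FiniteMeasure

variable {Ω ι : Type*} {L : Filter ι} [MeasurableSpace Ω] [TopologicalSpace Ω]
  [OpensMeasurableSpace Ω] [HasOuterApproxClosed Ω]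

theorem tendsto_measure_of_null_frontier_of_tendsto {μ : FiniteMeasure Ω}
    {μs : ι → FiniteMeasure Ω} (μs_lim : Tendsto μs L (𝓝 μ)) {E : Set Ω}
    (E_nullbdry : μ (frontier E) = 0) : Tendsto (fun i ↦ μs i E) L (𝓝 (μ E)) := by
  rcases eq_or_ne μ 0 with rfl | hμ
  · have hmass : Tendsto (fun i ↦ (μs i).mass) L (𝓝 0) := by simpa using μs_lim.mass
    simpa using tendsto_of_tendsto_of_tendsto_of_le_of_le tendsto_const_nhds hmass
      (fun _ ↦ zero_le) (fun i ↦ (μs i).apply_le_mass E)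
  have : Nonempty Ω :=
    not_isEmpty_iff.mp fun _ ↦ hμ (by ext s; simp [Set.eq_empty_of_isEmpty s])
  have normalized_lim := ProbabilityMeasure.tendsto_measure_of_null_frontier_of_tendsto
    (tendsto_normalize_of_tendsto μs_lim hμ) (E := E)
    (by rw [normalize_eq_of_nonzero _ hμ, E_nullbdry, mul_zero])
  simp_rw [self_eq_mass_mul_normalize _ E]
  exact μs_lim.mass.mul normalized_lim

end MeasureTheory.FiniteMeasure

section Metric

variable {X : Type*} [PseudoMetricSpace X] [MeasurableSpace X]

theorem measure_ball_eq_zero_of_notMem_thickening {μ : Measure X} {K : Set X} (hμ : μ Kᶜ = 0)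
    {r : ℝ} {z : X} (hz : z ∉ thickening r K) : μ (ball z r) = 0 :=
  measure_mono_null (fun x hx hxK ↦ hz (mem_thickening_iff.mpr ⟨x, hxK, mem_ball'.mp hx⟩)) hμ

theorem measurable_measure_ball [SecondCountableTopology X] [OpensMeasurableSpace X]
    (μ : Measure X) [SFinite μ] (r : ℝ) :
    Measurable fun z ↦ μ (ball z r) :=
  measurable_measure_prodMk_left
    (measurableSet_lt (measurable_snd.dist measurable_fst) measurable_const)

end Metric

section NormedSpace

variable {E : Type*} [NormedAddCommGroup E] [NormedSpace ℝ E] [FiniteDimensional ℝ E]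
  [MeasurableSpace E] [BorelSpace E]

theorem ae_measure_sphere_eq_zero [Nontrivial E] (ρ : Measure E) [ρ.IsAddHaarMeasure]
    (μ : Measure E) [SFinite μ] (r : ℝ) : ∀ᵐ z ∂ρ, μ (sphere z r) = 0 := by
  have hS : MeasurableSet {p : E × E | dist p.2 p.1 = r} :=
    measurableSet_eq_fun (measurable_snd.dist measurable_fst) measurable_const
  have hnull : ρ.prod μ {p : E × E | dist p.2 p.1 = r} = 0 := by
    rw [Measure.prod_apply_symm hS]
    have hslice (x : E) :
        (fun z ↦ (z, x)) ⁻¹' {p : E × E | dist p.2 p.1 = r} = sphere x r := by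
      ext z
      exact mem_sphere_comm.symm
    simp [hslice, Measure.addHaar_sphere]
  exact Measure.measure_ae_null_of_prod_null hnull

theorem tendsto_integral_measure_ball_mul_measure_ball [Nontrivial E] (ρ : Measure E)
    [ρ.IsAddHaarMeasure] {K : Set E} (hK : Bornology.IsBounded K)
    {ν₁ ν₂ : ℕ → FiniteMeasure E} {μ₁ μ₂ : FiniteMeasure E}
    (h₁ : Tendsto ν₁ atTop (𝓝 μ₁)) (h₂ : Tendsto ν₂ atTop (𝓝 μ₂))
    (hsupp : ∀ n, (ν₁ n : Measure E) Kᶜ = 0) (r : ℝ) :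
    Tendsto (fun n ↦ ∫ z, (ν₁ n (ball z r) : ℝ) * ν₂ n (ball z r) ∂ρ) atTop
      (𝓝 (∫ z, (μ₁ (ball z r) : ℝ) * μ₂ (ball z r) ∂ρ)) := by
  obtain ⟨C₁, hC₁⟩ := h₁.mass.bddAbove_range
  obtain ⟨C₂, hC₂⟩ := h₂.mass.bddAbove_range
  let bound : E → ℝ := (thickening r K).indicator fun _ ↦ (C₁ * C₂ : ℝ≥0)
  have bound_integrable : Integrable bound ρ :=
    (integrable_indicator_iff isOpen_thickening.measurableSet).mpr
      (integrableOn_const hK.thickening.measure_lt_top.ne)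
  have le_bound (n : ℕ) (z : E) : ‖(ν₁ n (ball z r) : ℝ) * ν₂ n (ball z r)‖ ≤ bound z := by
    by_cases hz : z ∈ thickening r K
    · rw [show bound z = _ from Set.indicator_of_mem hz _, ← NNReal.coe_mul,
        Real.norm_of_nonneg (by positivity)]
      gcongr
      exact ((ν₁ n).apply_le_mass _).trans (hC₁ ⟨n, rfl⟩)
      exact ((ν₂ n).apply_le_mass _).trans (hC₂ ⟨n, rfl⟩)
    · have : ν₁ n (ball z r) = 0 := (FiniteMeasure.null_iff_toMeasure_null _ _).mpr
        (measure_ball_eq_zero_of_notMem_thickening (hsupp n) hz)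
      simp [this, bound, hz]
  have lim_ae : ∀ᵐ z ∂ρ, Tendsto (fun n ↦ (ν₁ n (ball z r) : ℝ) * ν₂ n (ball z r)) atTop
      (𝓝 ((μ₁ (ball z r) : ℝ) * μ₂ (ball z r))) := by
    filter_upwards [ae_measure_sphere_eq_zero ρ μ₁ r, ae_measure_sphere_eq_zero ρ μ₂ r]
      with z hz₁ hz₂
    have null_frontier {μ : FiniteMeasure E} (hz : (μ : Measure E) (sphere z r) = 0) :
        μ (frontier (ball z r)) = 0 :=
      (FiniteMeasure.null_iff_toMeasure_null _ _).mpr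
        (measure_mono_null frontier_ball_subset_sphere hz)
    exact (NNReal.tendsto_coe.mpr
      (FiniteMeasure.tendsto_measure_of_null_frontier_of_tendsto h₁ (null_frontier hz₁))).mul
      (NNReal.tendsto_coe.mpr
      (FiniteMeasure.tendsto_measure_of_null_frontier_of_tendsto h₂ (null_frontier hz₂)))
  refine tendsto_integral_of_dominated_convergence bound (fun n ↦ ?_) bound_integrable
    (fun n ↦ .of_forall (le_bound n)) lim_ae
  exact (measurable_measure_ball (ν₁ n : Measure E) r).ennreal_toReal.mul
    (measurable_measure_ball (ν₂ n : Measure E) r).ennreal_toReal |>.aestronglyMeasurable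

end NormedSpace

theorem tendsto_rInner_of_tendsto {K : Set (EuclideanSpace ℝ (Fin 2))}
    (hK : Bornology.IsBounded K) {ν₁ ν₂ : ℕ → FiniteMeasure (EuclideanSpace ℝ (Fin 2))}
    {μ₁ μ₂ : FiniteMeasure (EuclideanSpace ℝ (Fin 2))}
    (h₁ : Tendsto ν₁ atTop (𝓝 μ₁)) (h₂ : Tendsto ν₂ atTop (𝓝 μ₂))
    (hsupp : ∀ n, (ν₁ n : Measure (EuclideanSpace ℝ (Fin 2))) Kᶜ = 0) (r : ℝ) :
    Tendsto (fun n ↦ rInner (ν₁ n) (ν₂ n) r) atTop (𝓝 (rInner μ₁ μ₂ r)) :=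
  (tendsto_integral_measure_ball_mul_measure_ball volume hK h₁ h₂ hsupp r).const_mul _

theorem rNorm_rInner_weakstar_continuous_general
    (K : Set (EuclideanSpace ℝ (Fin 2))) (hK : IsCompact K)
    (ν₁ : ℕ → Measure (EuclideanSpace ℝ (Fin 2))) (μ₁ : Measure (EuclideanSpace ℝ (Fin 2)))
    (ν₂ : ℕ → Measure (EuclideanSpace ℝ (Fin 2))) (μ₂ : Measure (EuclideanSpace ℝ (Fin 2)))
    (hfin₁ : ∀ n, IsFiniteMeasure (ν₁ n)) (hfinμ₁ : IsFiniteMeasure μ₁)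
    (hfin₂ : ∀ n, IsFiniteMeasure (ν₂ n)) (hfinμ₂ : IsFiniteMeasure μ₂)
    (hsupp₁ : ∀ n, ν₁ n Kᶜ = 0)
    (hconv₁ : ∀ f : BoundedContinuousFunction (EuclideanSpace ℝ (Fin 2)) ℝ,
      Tendsto (fun n => ∫ x, f x ∂(ν₁ n)) atTop (nhds (∫ x, f x ∂μ₁)))
    (hconv₂ : ∀ f : BoundedContinuousFunction (EuclideanSpace ℝ (Fin 2)) ℝ,
      Tendsto (fun n => ∫ x, f x ∂(ν₂ n)) atTop (nhds (∫ x, f x ∂μ₂)))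
    (r : ℝ) :
    Tendsto (fun n => rNorm (ν₁ n) r) atTop (nhds (rNorm μ₁ r)) ∧
    Tendsto (fun n => rInner (ν₁ n) (ν₂ n) r) atTop (nhds (rInner μ₁ μ₂ r)) := by
  let F₁ (n : ℕ) : FiniteMeasure (EuclideanSpace ℝ (Fin 2)) := ⟨ν₁ n, hfin₁ n⟩
  let F₂ (n : ℕ) : FiniteMeasure (EuclideanSpace ℝ (Fin 2)) := ⟨ν₂ n, hfin₂ n⟩
  let G₁ : FiniteMeasure (EuclideanSpace ℝ (Fin 2)) := ⟨μ₁, hfinμ₁⟩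
  let G₂ : FiniteMeasure (EuclideanSpace ℝ (Fin 2)) := ⟨μ₂, hfinμ₂⟩
  have h₁ : Tendsto F₁ atTop (𝓝 G₁) :=
    FiniteMeasure.tendsto_iff_forall_integral_tendsto.mpr hconv₁
  have h₂ : Tendsto F₂ atTop (𝓝 G₂) :=
    FiniteMeasure.tendsto_iff_forall_integral_tendsto.mpr hconv₂
  exact ⟨(Real.continuous_sqrt.tendsto _).comp
      (tendsto_rInner_of_tendsto hK.isBounded h₁ h₁ hsupp₁ r),
    tendsto_rInner_of_tendsto hK.isBounded h₁ h₂ hsupp₁ r⟩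

/-- If `(νₙ¹)`, `ν¹` and `(νₙ²)`, `ν²` are finite Borel measures on the plane,
all supported in a compact set `K`, with `νₙⁱ → νⁱ` weak-*, then for every fixed `r > 0` the
norms `‖νₙ¹‖_r` converge to `‖ν¹‖_r` and the bilinear forms `⟨νₙ¹, νₙ²⟩_r` converge to
`⟨ν¹, ν²⟩_r`. -/
theorem rNorm_rInner_weakstar_continuous
    (K : Set (EuclideanSpace ℝ (Fin 2))) (hK : IsCompact K)
    (ν₁ : ℕ → Measure (EuclideanSpace ℝ (Fin 2))) (μ₁ : Measure (EuclideanSpace ℝ (Fin 2)))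
    (ν₂ : ℕ → Measure (EuclideanSpace ℝ (Fin 2))) (μ₂ : Measure (EuclideanSpace ℝ (Fin 2)))
    (hfin₁ : ∀ n, IsFiniteMeasure (ν₁ n)) (hfinμ₁ : IsFiniteMeasure μ₁)
    (hfin₂ : ∀ n, IsFiniteMeasure (ν₂ n)) (hfinμ₂ : IsFiniteMeasure μ₂)
    (hsupp₁ : ∀ n, ν₁ n Kᶜ = 0) (hsuppμ₁ : μ₁ Kᶜ = 0)
    (hsupp₂ : ∀ n, ν₂ n Kᶜ = 0) (hsuppμ₂ : μ₂ Kᶜ = 0)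
    (hconv₁ : ∀ f : BoundedContinuousFunction (EuclideanSpace ℝ (Fin 2)) ℝ,
      Tendsto (fun n => ∫ x, f x ∂(ν₁ n)) atTop (nhds (∫ x, f x ∂μ₁)))
    (hconv₂ : ∀ f : BoundedContinuousFunction (EuclideanSpace ℝ (Fin 2)) ℝ,
      Tendsto (fun n => ∫ x, f x ∂(ν₂ n)) atTop (nhds (∫ x, f x ∂μ₂)))
    (r : ℝ) (hr : 0 < r) :
    Tendsto (fun n => rNorm (ν₁ n) r) atTop (nhds (rNorm μ₁ r)) ∧
    Tendsto (fun n => rInner (ν₁ n) (ν₂ n) r) atTop (nhds (rInner μ₁ μ₂ r)) :=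
  rNorm_rInner_weakstar_continuous_general K hK ν₁ μ₁ ν₂ μ₂ hfin₁ hfinμ₁ hfin₂ hfinμ₂ hsupp₁ hconv₁
    hconv₂ r
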